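/- arXiv:2502.09923 — 3 statements merged into one kernel-verified Lean document; each statement's English description precedes it below -/
import Mathlib

section
/- Under the hypotheses of the joint-distribution equality p_n(o^n)·[o = m_de(o^n)] = p(o)·[o^n = m_n(o)] with full-support p and p_n on finite sets of equal size, the functions m_de and m_n are mutually inverse bijections, and p_n(m_n(o)) = p(o) for all o (i.e., m_n is a noise function homogeneous to any f_n inducing p_n). -/
/-- Under the joint-distribution equality with full-support marginals, `m_de` and `m_n`
are mutually inverse bijections and `p_n (m_n o) = p o` for all `o`. -/
theorem stmt_6 {Oc On : Type*} [Fintype Oc] [Fintype On] [DecidableEq Oc] [DecidableEq On]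
    (hcard : Fintype.card Oc = Fintype.card On)
    (p : Oc → ℝ) (p_n : On → ℝ)
    (hp : ∀ o, 0 < p o) (hpn : ∀ w, 0 < p_n w)
    (hps : ∑ o, p o = 1) (hpns : ∑ w, p_n w = 1)
    (m_de : On → Oc) (m_n : Oc → On)
    (hjoint : ∀ (o : Oc) (w : On),
      p_n w * (if o = m_de w then 1 else 0) = p o * (if w = m_n o then 1 else 0)) :
    (∀ o, m_de (m_n o) = o) ∧ (∀ w, m_n (m_de w) = w) ∧
    (Function.Bijective m_de ∧ Function.Bijective m_n) ∧
    (∀ o, p_n (m_n o) = p o) := by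
  have hinv : ∀ o, m_de (m_n o) = o := by
    intro o
    have h := hjoint o (m_n o)
    simp only [if_pos rfl, mul_one] at h
    by_contra hne
    rw [if_neg (fun he => hne he.symm), mul_zero] at h
    simp at h
    exact (hp o).ne' h.symm
  have hval : ∀ o, p_n (m_n o) = p o := by
    intro o
    have h := hjoint o (m_n o)
    rw [if_pos rfl, if_pos (hinv o).symm, mul_one, mul_one] at h
    exact h
  have hninj : Function.Injective m_n := Function.LeftInverse.injective hinv
  have hnbij : Function.Bijective m_n :=
    (Fintype.bijective_iff_injective_and_card m_n).2 ⟨hninj, hcard⟩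
  have hdesurj : Function.Surjective m_de := fun o => ⟨m_n o, hinv o⟩
  have hdebij : Function.Bijective m_de :=
    (Fintype.bijective_iff_surjective_and_card m_de).2 ⟨hdesurj, hcard.symm⟩
  have hinv2 : ∀ w, m_n (m_de w) = w := by
    intro w
    apply hdebij.injective
    exact hinv (m_de w)
  exact ⟨hinv, hinv2, ⟨hdebij, hnbij⟩, hval⟩
end

section
/- The set of deterministic denoising kernels q_de achieving zero KL divergence D_KL(p_n(o^n)·q_de(o|o^n) ‖ p(o)·q_n(o^n|o)) for some deterministic q_n equals exactly the set of posterior denoising kernels {o^n ↦ point mass at g^{-1}(o^n)} ranging over bijections g : O^c → O^n that are homogeneous to f_n under p (i.e., push p forward to p_n). -/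
/-- The deterministic denoising kernels achieving zero KL (i.e. joint equality) for some
deterministic noising kernel are exactly the posteriors `w ↦ δ_{g⁻¹ w}` of bijections `g`
homogeneous to `f` under `p` (pushing `p` forward to `p_n`). -/
theorem stmt_8 {Oc On : Type*} [Fintype Oc] [Fintype On] [DecidableEq Oc] [DecidableEq On]
    (p : Oc → ℝ) (hp : ∀ o, 0 < p o) (hps : ∑ o, p o = 1)
    (f : Oc ≃ On) (p_n : On → ℝ)
    (hpn : ∀ w : On, p_n w = ∑ o ∈ Finset.univ.filter (fun o => f o = w), p o) :
    ∀ m_de : On → Oc,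
      (∃ m_n : Oc → On, ∀ (o : Oc) (w : On),
          p_n w * (if o = m_de w then (1:ℝ) else 0)
            = p o * (if w = m_n o then 1 else 0))
      ↔ ∃ g : Oc ≃ On,
          (∀ w : On, ∑ o ∈ Finset.univ.filter (fun o => g o = w), p o = p_n w) ∧
          (∀ w : On, m_de w = g.symm w) := by
  have hfilter : ∀ (e : Oc ≃ On) (w : On),
      Finset.univ.filter (fun o => e o = w) = {e.symm w} := by
    intro e w
    ext o
    simp [Finset.mem_filter, Equiv.apply_eq_iff_eq_symm_apply]
  have hpn' : ∀ w, p_n w = p (f.symm w) := by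
    intro w; rw [hpn, hfilter, Finset.sum_singleton]
  have hpnpos : ∀ w, 0 < p_n w := fun w => (hpn' w) ▸ hp _
  intro m_de
  constructor
  · rintro ⟨m_n, h⟩
    have hkey : ∀ w, m_n (m_de w) = w ∧ p_n w = p (m_de w) := by
      intro w
      have hw := h (m_de w) w
      rw [if_pos rfl, mul_one] at hw
      by_cases hcase : w = m_n (m_de w)
      · rw [if_pos hcase, mul_one] at hw
        exact ⟨hcase.symm, hw⟩
      · rw [if_neg hcase, mul_zero] at hw
        exact absurd hw (hpnpos w).ne'
    have hinj : Function.Injective m_de := by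
      intro a b hab
      have ha := (hkey a).1
      have hb := (hkey b).1
      rw [hab, hb] at ha
      exact ha.symm
    have hcard : Fintype.card On = Fintype.card Oc := Fintype.card_congr f.symm
    have hbij : Function.Bijective m_de :=
      (Fintype.bijective_iff_injective_and_card m_de).2 ⟨hinj, hcard⟩
    refine ⟨(Equiv.ofBijective m_de hbij).symm, ?_, ?_⟩
    · intro w
      rw [hfilter, Finset.sum_singleton]
      simp only [Equiv.symm_symm, Equiv.ofBijective_apply]
      exact ((hkey w).2).symm
    · intro w
      simp [Equiv.ofBijective_apply]
  · rintro ⟨g, hg, hde⟩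
    refine ⟨g, fun o w => ?_⟩
    have hgw : p_n w = p (g.symm w) := by
      rw [← hg w, hfilter, Finset.sum_singleton]
    by_cases hc : o = g.symm w
    · have hw : w = g o := by rw [hc]; simp
      rw [hde, if_pos hc, if_pos hw, mul_one, mul_one, hgw, hc]
    · have hw : ¬ w = g o := fun hwe => hc (by rw [hwe]; simp)
      rw [hde, if_neg hc, if_neg hw, mul_zero, mul_zero]
end

section
/- The minimization problems min over q of L'_KL and min over (q, q_n) of L_KL have the same set of optimal denoising kernels q, both consisting of kernels q with Σ_{o^n} p_n(o^n)·q(o|o^n) = p(o), when p has full support. -/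
/-- Per-term Gibbs bound: `a * log (a/b) ≥ a - b`, with equality only if `a = b`. -/
lemma gibbs_term (a b : ℝ) (ha : 0 ≤ a) (hb : 0 ≤ b) (hab : 0 < a → 0 < b) :
    0 ≤ a * Real.log (a / b) - (a - b) ∧
      (a * Real.log (a / b) - (a - b) = 0 → a = b) := by
  rcases eq_or_lt_of_le ha with h0 | h0
  · refine ⟨by simp [← h0, hb], fun h => ?_⟩
    simp [← h0] at h ⊢
    linarith
  · have hbp : 0 < b := hab h0
    by_cases hab' : a = b
    · subst hab'
      simp [div_self (ne_of_gt h0)]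
    · have hne : b / a ≠ 1 := by
        intro h
        exact hab' ((div_eq_one_iff_eq (ne_of_gt h0)).mp h).symm
      have hlt := Real.log_lt_sub_one_of_pos (div_pos hbp h0) hne
      rw [Real.log_div (ne_of_gt hbp) (ne_of_gt h0)] at hlt
      have hlog : Real.log (a / b) = Real.log a - Real.log b :=
        Real.log_div (ne_of_gt h0) (ne_of_gt hbp)
      have h1 : a * (Real.log b - Real.log a) < a * (b / a - 1) :=
        mul_lt_mul_of_pos_left hlt h0
      have h2 : a * (b / a - 1) = b - a := by field_simp
      have h3 : a * (Real.log a - Real.log b) = -(a * (Real.log b - Real.log a)) := by ring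
      have hstrict : 0 < a * Real.log (a / b) - (a - b) := by
        rw [hlog, h3]; linarith
      exact ⟨le_of_lt hstrict, fun h => absurd h (by linarith)⟩

/-- Gibbs' inequality equality case for finitely supported distributions. -/
lemma gibbs {ι : Type*} [Fintype ι] (a b : ι → ℝ) (ha : ∀ i, 0 ≤ a i) (hb : ∀ i, 0 ≤ b i)
    (hab : ∀ i, 0 < a i → 0 < b i) (hsa : ∑ i, a i = 1) (hsb : ∑ i, b i = 1) :
    (∑ i, a i * Real.log (a i / b i)) = 0 ↔ ∀ i, a i = b i := by
  constructor
  · intro hsum i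
    have hnn : ∀ j ∈ Finset.univ, 0 ≤ a j * Real.log (a j / b j) - (a j - b j) :=
      fun j _ => (gibbs_term (a j) (b j) (ha j) (hb j) (hab j)).1
    have hsum' : ∑ j, (a j * Real.log (a j / b j) - (a j - b j)) = 0 := by
      rw [Finset.sum_sub_distrib, Finset.sum_sub_distrib, hsum, hsa, hsb]; ring
    have := (Finset.sum_eq_zero_iff_of_nonneg hnn).mp hsum' i (Finset.mem_univ i)
    exact (gibbs_term (a i) (b i) (ha i) (hb i) (hab i)).2 this
  · intro h
    apply Finset.sum_eq_zero
    intro i _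
    rw [h i]
    rcases eq_or_lt_of_le (hb i) with h0 | h0
    · simp [← h0]
    · simp [div_self (ne_of_gt h0)]

/-- The minimizers (value 0) of `L_KL` over `(q, q_n)` and of `L'_KL` over `q` determine
the same set of denoising kernels: those with `Σ_w p_n(w) q(o|w) = p(o)`. -/
theorem stmt_13 {Oc On : Type*} [Fintype Oc] [Fintype On]
    (p : Oc → ℝ) (p_n : On → ℝ)
    (hp : ∀ o, 0 < p o) (hpn : ∀ w, 0 < p_n w)
    (hps : ∑ o, p o = 1) (hpns : ∑ w, p_n w = 1)
    (q : On → Oc → ℝ) (hq0 : ∀ w o, 0 ≤ q w o) (hq1 : ∀ w, ∑ o, q w o = 1) :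
    ((∃ q_n : Oc → On → ℝ,
        (∀ o w, 0 ≤ q_n o w) ∧ (∀ o, ∑ w, q_n o w = 1) ∧
        (∀ w o, 0 < p_n w * q w o → 0 < p o * q_n o w) ∧
        (∑ w, ∑ o, p_n w * q w o *
            Real.log ((p_n w * q w o) / (p o * q_n o w)) = 0))
      ↔ (∀ o, ∑ w, p_n w * q w o = p o)) ∧
    ((∑ o, (∑ w, p_n w * q w o) *
        Real.log ((∑ w, p_n w * q w o) / p o) = 0)
      ↔ (∀ o, ∑ w, p_n w * q w o = p o)) := by
  have hqs1 : ∑ w, ∑ o, p_n w * q w o = 1 := by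
    rw [← hpns]
    exact Finset.sum_congr rfl fun w _ => by
      rw [← Finset.mul_sum, hq1, mul_one]
  constructor
  · constructor
    · rintro ⟨q_n, hqn0, hqn1, hqnpos, hsum⟩ o
      have key := (gibbs (fun x : On × Oc => p_n x.1 * q x.1 x.2)
          (fun x : On × Oc => p x.2 * q_n x.2 x.1)
          (fun x => mul_nonneg (hpn x.1).le (hq0 x.1 x.2))
          (fun x => mul_nonneg (hp x.2).le (hqn0 x.2 x.1))
          (fun x => hqnpos x.1 x.2)
          (by rw [Fintype.sum_prod_type]; exact hqs1)
          (by
            rw [Fintype.sum_prod_type, Finset.sum_comm, ← hps]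
            exact Finset.sum_congr rfl fun o _ => by
              show ∑ w, p o * q_n o w = p o
              rw [← Finset.mul_sum, hqn1, mul_one])).mp
        (by rw [Fintype.sum_prod_type]; exact hsum)
      have hkey : ∀ w, p_n w * q w o = p o * q_n o w := fun w => key (w, o)
      rw [Finset.sum_congr rfl fun w _ => hkey w, ← Finset.mul_sum, hqn1, mul_one]
    · intro h
      refine ⟨fun o w => p_n w * q w o / p o,
        fun o w => div_nonneg (mul_nonneg (hpn w).le (hq0 w o)) (hp o).le,
        fun o => by rw [← Finset.sum_div, h, div_self (ne_of_gt (hp o))],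
        fun w o hpos => by
          rwa [mul_div_cancel₀ _ (ne_of_gt (hp o))],
        ?_⟩
      apply Finset.sum_eq_zero
      intro w _
      apply Finset.sum_eq_zero
      intro o _
      rw [mul_div_cancel₀ _ (ne_of_gt (hp o))]
      rcases eq_or_lt_of_le (mul_nonneg (hpn w).le (hq0 w o)) with h0 | h0
      · simp [← h0]
      · simp [div_self (ne_of_gt h0)]
  · exact gibbs (fun o => ∑ w, p_n w * q w o) p
      (fun o => Finset.sum_nonneg fun w _ => mul_nonneg (hpn w).le (hq0 w o))
      (fun o => (hp o).le)
      (fun o _ => hp o)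
      (by rw [Finset.sum_comm]; exact hqs1)
      hps
end
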